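/- arXiv:1406.3378 — 2 statements merged into one kernel-verified Lean document; each statement's English description precedes it below -/
import Mathlib

section
/- For every partial recursive function f : ℕ^k ⇀ ℕ, the probabilistic function p_f : ℕ^k → 𝒫(ℕ), defined by p_f(x⃗)(y) = 1 if f(x⃗) is defined and equal to y, and p_f(x⃗)(y) = 0 otherwise, is probabilistic recursive (p_f ∈ PR). -/
noncomputable section
open scoped Classical

/-- A pseudodistribution on ℕ: pointwise nonnegative, summable, with total mass at most 1. -/
def IsPseudoDist (D : ℕ → ℝ) : Prop :=
  (∀ n, 0 ≤ D n) ∧ Summable D ∧ ∑' n, D n ≤ 1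

/-- Generalized composition:
(f ⊙ (g₁,…,gₙ))(x⃗)(y) = ∑_{z⃗} f(z⃗)(y) · ∏ᵢ gᵢ(x⃗)(zᵢ). -/
noncomputable def genComp {n k : ℕ} (f : (Fin n → ℕ) → ℕ → ℝ)
    (g : Fin n → (Fin k → ℕ) → ℕ → ℝ) : (Fin k → ℕ) → ℕ → ℝ :=
  fun x y => ∑' z : Fin n → ℕ, f z y * ∏ i, g i x (z i)

/-- Auxiliary for primitive recursion: h(x⃗,0) = f(x⃗),
h(x⃗,y+1)(w) = ∑_z g(x⃗,y,z)(w) · h(x⃗,y)(z). -/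
noncomputable def primRecAux {k : ℕ} (f : (Fin k → ℕ) → ℕ → ℝ)
    (g : (Fin (k + 2) → ℕ) → ℕ → ℝ) (x : Fin k → ℕ) : ℕ → ℕ → ℝ
  | 0 => f x
  | y + 1 => fun w =>
      ∑' z : ℕ, g (Fin.snoc (Fin.snoc x y) z) w * primRecAux f g x y z

/-- Primitive recursion of probabilistic functions, as a function on ℕ^(k+1). -/
noncomputable def primRec {k : ℕ} (f : (Fin k → ℕ) → ℕ → ℝ)
    (g : (Fin (k + 2) → ℕ) → ℕ → ℝ) : (Fin (k + 1) → ℕ) → ℕ → ℝ :=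
  fun v => primRecAux f g (Fin.init v) (v (Fin.last k))

/-- Minimization: (μf)(x⃗)(y) = f(x⃗,y)(0) · ∏_{z<y} (∑_{k>0} f(x⃗,z)(k)). -/
noncomputable def minimize {k : ℕ} (f : (Fin (k + 1) → ℕ) → ℕ → ℝ) :
    (Fin k → ℕ) → ℕ → ℝ :=
  fun x y =>
    f (Fin.snoc x y) 0 *
      ∏ z ∈ Finset.range y, ∑' m : {m : ℕ // 0 < m}, f (Fin.snoc x z) (m : ℕ)

/-- The class PR of probabilistic recursive functions: the smallest class of
probabilistic functions containing the basic probabilistic functions (zero,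
successor, projections, fair coin) and closed under generalized composition,
primitive recursion and minimization. -/
inductive PR : {k : ℕ} → ((Fin k → ℕ) → ℕ → ℝ) → Prop where
  /-- The zero function z(n) = Dirac(0). -/
  | zero : PR (fun (_ : Fin 1 → ℕ) (y : ℕ) => if y = 0 then (1 : ℝ) else 0)
  /-- The successor function s(n) = Dirac(n+1). -/
  | succ : PR (fun (x : Fin 1 → ℕ) (y : ℕ) => if y = x 0 + 1 then (1 : ℝ) else 0)
  /-- The projections Πⁿₘ(x⃗) = Dirac(xₘ). -/
  | proj {n : ℕ} (m : Fin n) :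
      PR (fun (x : Fin n → ℕ) (y : ℕ) => if y = x m then (1 : ℝ) else 0)
  /-- The fair coin r(x), assigning probability 1/2 to each of x and x+1. -/
  | coin : PR (fun (x : Fin 1 → ℕ) (y : ℕ) =>
      if y = x 0 ∨ y = x 0 + 1 then (1 : ℝ) / 2 else 0)
  /-- Closure under generalized composition. -/
  | comp {n k : ℕ} {f : (Fin n → ℕ) → ℕ → ℝ} {g : Fin n → (Fin k → ℕ) → ℕ → ℝ} :
      PR f → (∀ i, PR (g i)) → PR (genComp f g)
  /-- Closure under primitive recursion. -/
  | primrec {k : ℕ} {f : (Fin k → ℕ) → ℕ → ℝ} {g : (Fin (k + 2) → ℕ) → ℕ → ℝ} :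
      PR f → PR g → PR (primRec f g)
  /-- Closure under minimization. -/
  | minim {k : ℕ} {f : (Fin (k + 1) → ℕ) → ℕ → ℝ} :
      PR f → PR (minimize f)

/-! On a Dirac distribution `p_f` every sum in the three closure operations of `PR` has at most
one nonzero term, so each operation sends Dirac distributions to the Dirac distribution of the
corresponding operation on partial functions: generalized composition becomes strict composition,
primitive recursion becomes `Nat.rec`, and minimization of a total `t` becomes `Nat.rfind`, since
the factor `∏_{z<y} ∑_{m>0} p_t(x,z)(m)` is the indicator that `t(x,z) ≠ 0` for all `z < y`.
Induction over Mathlib's basis `Nat.Partrec'` of the partial recursive functions then gives the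
theorem, permutations of arguments being compositions with projections. -/

lemma Fin.snoc_comp_finRotate_symm {α : Type*} {n : ℕ} (v : Fin n → α) (a : α) :
    (fun i => Fin.snoc (α := fun _ => α) v a ((finRotate (n + 1)).symm i)) = Fin.cons a v := by
  simp [Fin.snoc_eq_cons_rotate]

lemma List.Vector.ofFn_cons {α : Type*} {n : ℕ} (a : α) (v : Fin n → α) :
    List.Vector.ofFn (Fin.cons a v : Fin (n + 1) → α) = a ::ᵥ List.Vector.ofFn v :=
  rfl

lemma List.Vector.ofFn_snoc_comp_finRotate_symm {α : Type*} {n : ℕ} (v : Fin n → α) (a : α) :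
    List.Vector.ofFn (fun i => Fin.snoc (α := fun _ => α) v a ((finRotate (n + 1)).symm i)) =
      a ::ᵥ List.Vector.ofFn v := by
  rw [Fin.snoc_comp_finRotate_symm, List.Vector.ofFn_cons]

lemma List.Vector.ofFn_snoc_snoc_comp_finRotate_symm_symm {α : Type*} {n : ℕ} (v : Fin n → α)
    (a b : α) :
    List.Vector.ofFn (fun i => Fin.snoc (α := fun _ => α) (Fin.snoc (α := fun _ => α) v a) b
      ((finRotate (n + 2)).symm ((finRotate (n + 2)).symm i))) =
      a ::ᵥ b ::ᵥ List.Vector.ofFn v := by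
  have h := congrFun (Fin.snoc_comp_finRotate_symm (Fin.snoc (α := fun _ => α) v a) b)
  simp only [h, Fin.cons_snoc_eq_snoc_cons]
  rw [ofFn_snoc_comp_finRotate_symm, ofFn_cons]

lemma List.Vector.mem_mOfFn_part {α : Type*} {n : ℕ} (g : Fin n → Part α) (v : List.Vector α n) :
    v ∈ List.Vector.mOfFn g ↔ ∀ i, v.get i ∈ g i := by
  induction n with
  | zero => simp [List.Vector.mOfFn, List.Vector.eq_nil v]
  | succ n ih =>
    simp only [List.Vector.mOfFn, Part.bind_eq_bind, Part.mem_bind_iff, ih, Part.pure_eq_some,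
      Part.mem_some_iff, Fin.forall_fin_succ]
    constructor
    · rintro ⟨a, ha, w, hw, rfl⟩
      simpa using ⟨ha, hw⟩
    · rintro ⟨h0, hsucc⟩
      exact ⟨v.head, by simpa using h0, v.tail, by simpa using hsucc, v.cons_head_tail.symm⟩

def partDirac {k : ℕ} (f : (Fin k → ℕ) →. ℕ) : (Fin k → ℕ) → ℕ → ℝ :=
  fun x y => if y ∈ f x then 1 else 0

@[simp]
lemma partDirac_lift {k : ℕ} (t : (Fin k → ℕ) → ℕ) :
    partDirac (PFun.lift t) = fun x y => if y = t x then 1 else 0 := by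
  funext x y
  simp only [partDirac, PFun.coe_val, Part.mem_some_iff]

lemma tsum_boole_of_unique {α : Type*} (P : α → Prop) [DecidablePred P] [Decidable (∃ a, P a)]
    (hP : ∀ a b, P a → P b → a = b) :
    ∑' a, (if P a then (1 : ℝ) else 0) = if ∃ a, P a then 1 else 0 := by
  split_ifs with h
  · obtain ⟨a, ha⟩ := h
    rw [tsum_eq_single a fun b hb => if_neg fun hPb => hb (hP b a hPb ha), if_pos ha]
  · simp [not_exists.1 h]

lemma genComp_partDirac {n k : ℕ} (f : (Fin n → ℕ) →. ℕ) (g : Fin n → (Fin k → ℕ) →. ℕ) :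
    genComp (partDirac f) (fun i => partDirac (g i)) =
      fun x y => if ∃ z : Fin n → ℕ, y ∈ f z ∧ ∀ i, z i ∈ g i x then 1 else 0 := by
  funext x y
  simp only [genComp, partDirac, Fintype.prod_boole, ite_zero_mul_ite_zero, mul_one]
  exact tsum_boole_of_unique _ fun z z' hz hz' =>
    funext fun i => Part.mem_unique (hz.2 i) (hz'.2 i)

lemma primRecAux_partDirac_lift {k : ℕ} (f : (Fin k → ℕ) → ℕ) (g : (Fin (k + 2) → ℕ) → ℕ)
    (x : Fin k → ℕ) (y : ℕ) :
    primRecAux (partDirac (PFun.lift f)) (partDirac (PFun.lift g)) x y =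
      fun w => if w = Nat.rec (motive := fun _ => ℕ) (f x)
        (fun y r => g (Fin.snoc (Fin.snoc x y) r)) y then 1 else 0 := by
  induction y with
  | zero => simp [primRecAux]
  | succ y ih =>
    funext w
    rw [primRecAux, ih]
    simp only [partDirac_lift, mul_boole]
    rw [tsum_ite_eq]

lemma minimize_partDirac_lift {k : ℕ} (t : (Fin (k + 1) → ℕ) → ℕ) :
    minimize (partDirac (PFun.lift t)) =
      partDirac fun x => Nat.rfind fun y => Part.some (decide (t (Fin.snoc x y) = 0)) := by
  have positive_mass (w : Fin (k + 1) → ℕ) :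
      ∑' m : {m : ℕ // 0 < m}, (if (m : ℕ) = t w then (1 : ℝ) else 0) =
        if t w ≠ 0 then 1 else 0 := by
    rw [tsum_boole_of_unique _ fun a b ha hb => Subtype.ext (ha.trans hb.symm)]
    congr 1
    exact propext ⟨fun ⟨m, hm⟩ => hm ▸ m.2.ne', fun h => ⟨⟨t w, Nat.pos_of_ne_zero h⟩, rfl⟩⟩
  funext x y
  simp only [minimize, partDirac_lift, positive_mass, Finset.prod_boole, ite_zero_mul_ite_zero,
    mul_one]
  simp only [partDirac, Finset.mem_range]
  congr 1
  refine propext (Iff.trans ?_ Nat.mem_rfind.symm)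
  simp [eq_comm]

namespace PR

theorem partDirac_comp {n k : ℕ} {f : (Fin n → ℕ) →. ℕ} {g : Fin n → (Fin k → ℕ) →. ℕ}
    {h : (Fin k → ℕ) →. ℕ} (hf : PR (partDirac f)) (hg : ∀ i, PR (partDirac (g i)))
    (hh : ∀ x y, y ∈ h x ↔ ∃ z : Fin n → ℕ, y ∈ f z ∧ ∀ i, z i ∈ g i x) :
    PR (partDirac h) := by
  have hcomp := PR.comp hf hg
  rw [genComp_partDirac] at hcomp
  convert hcomp using 3 with x y
  simp only [partDirac, hh]

theorem partDirac_reindex {n k : ℕ} {f : (Fin n → ℕ) →. ℕ} (hf : PR (partDirac f))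
    (σ : Fin n → Fin k) : PR (partDirac fun x => f fun i => x (σ i)) := by
  refine partDirac_comp hf (g := fun i => PFun.lift fun x => x (σ i))
    (fun i => by simpa using PR.proj (σ i)) fun x y => ?_
  simp only [PFun.coe_val, Part.mem_some_iff]
  exact ⟨fun hy => ⟨_, hy, fun _ => rfl⟩, fun ⟨z, hy, hz⟩ => funext hz ▸ hy⟩

theorem partDirac_lift_primRec {k : ℕ} {f : (Fin k → ℕ) → ℕ} {g : (Fin (k + 2) → ℕ) → ℕ}
    (hf : PR (partDirac (PFun.lift f))) (hg : PR (partDirac (PFun.lift g))) :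
    PR (partDirac (PFun.lift fun v : Fin (k + 1) → ℕ =>
      Nat.rec (motive := fun _ => ℕ) (f (Fin.init v))
        (fun y r => g (Fin.snoc (Fin.snoc (Fin.init v) y) r)) (v (Fin.last k)))) := by
  have hrec := PR.primrec hf hg
  convert hrec using 1
  funext v
  rw [primRec, primRecAux_partDirac_lift, partDirac_lift]

theorem partDirac_rfind {k : ℕ} {t : (Fin (k + 1) → ℕ) → ℕ} (ht : PR (partDirac (PFun.lift t))) :
    PR (partDirac fun x => Nat.rfind fun y => Part.some (decide (t (Fin.snoc x y) = 0))) :=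
  minimize_partDirac_lift t ▸ PR.minim ht

-- Every basic function has positive arity, so the nullary constant needs a minimization.
theorem partDirac_const_zero : PR (partDirac (PFun.lift fun _ : Fin 0 → ℕ => 0)) := by
  have hzero : PR (partDirac (PFun.lift fun _ : Fin 1 → ℕ => 0)) := by
    simpa using PR.zero
  have hrfind : (fun _ : Fin 0 → ℕ => Nat.rfind fun _ => Part.some (decide (0 = 0))) =
      PFun.lift fun _ => 0 :=
    funext fun _ => Part.eq_some_iff.2 <|
      Nat.mem_rfind.2 ⟨Part.mem_some true, fun h => absurd h (Nat.not_lt_zero _)⟩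
  exact hrfind ▸ partDirac_rfind hzero

theorem partDirac_of_primrec' {n : ℕ} {f : List.Vector ℕ n → ℕ} (hf : Nat.Primrec' f) :
    PR (partDirac (PFun.lift fun x => f (List.Vector.ofFn x))) := by
  induction hf with
  | zero => exact partDirac_const_zero
  | succ => simpa [List.Vector.head_ofFn] using PR.succ
  | get i => simpa [List.Vector.get_ofFn] using PR.proj i
  | comp g _ _ ihf ihg =>
    refine partDirac_comp ihf ihg fun x y => ?_
    simp only [PFun.coe_val, Part.mem_some_iff]
    exact ⟨fun hy => ⟨_, hy, fun _ => rfl⟩, fun ⟨z, hy, hz⟩ => funext hz ▸ hy⟩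
  | prec _ _ ihf ihg =>
    -- `primRec` recurses on the last argument and passes `(x, y, r)` to the step function,
    -- `Nat.Primrec'.prec` on the first one and passes `(y, r, x)`: rotations translate.
    have hg := partDirac_reindex ihg fun i => (finRotate _).symm ((finRotate _).symm i)
    have hrec := partDirac_reindex (partDirac_lift_primRec ihf hg) (finRotate _)
    convert hrec using 1
    congr 1
    funext x
    have hx : (fun i => x (finRotate _ i)) = Fin.snoc (Fin.tail x) (x 0) := by
      rw [Fin.snoc_eq_cons_rotate, Fin.cons_self_tail]
    simp only [PFun.coe_val, hx, Fin.init_snoc, Fin.snoc_last,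
      List.Vector.ofFn_snoc_snoc_comp_finRotate_symm_symm, List.Vector.head_ofFn,
      List.Vector.tail_ofFn]
    rfl

theorem partDirac_of_partrec' {n : ℕ} {f : List.Vector ℕ n →. ℕ} (hf : Nat.Partrec' f) :
    PR (partDirac fun x => f (List.Vector.ofFn x)) := by
  induction hf with
  | prim hf => exact partDirac_of_primrec' hf
  | comp g _ _ ihf ihg =>
    refine partDirac_comp ihf ihg fun x y => ?_
    refine Part.mem_bind_iff.trans ?_
    simp only [List.Vector.mem_mOfFn_part]
    constructor
    · rintro ⟨v, hv, hy⟩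
      exact ⟨v.get, by rwa [List.Vector.ofFn_get], hv⟩
    · rintro ⟨z, hy, hz⟩
      exact ⟨List.Vector.ofFn z, by simpa using hz, hy⟩
  | rfind _ ih =>
    simpa only [List.Vector.ofFn_snoc_comp_finRotate_symm] using
      partDirac_rfind (partDirac_reindex ih (finRotate _).symm)

end PR

/-- for every partial recursive function f : ℕ^k ⇀ ℕ, the
probabilistic function p_f, with p_f(x⃗) the Dirac distribution on f(x⃗) when
f(x⃗) is defined and the empty distribution otherwise, is probabilistic recursive. -/
theorem partrec_dirac_mem_PR {k : ℕ} (f : (Fin k → ℕ) →. ℕ) (hf : Partrec f) :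
    PR (fun (x : Fin k → ℕ) (y : ℕ) => if y ∈ f x then (1 : ℝ) else 0) := by
  have hv : Nat.Partrec' fun v : List.Vector ℕ k => f v.get :=
    Nat.Partrec'.part_iff.2 (hf.comp Primrec.vector_get'.to_comp)
  have hget : (fun x => f (List.Vector.ofFn x).get) = f :=
    funext fun x => congrArg f (funext (List.Vector.get_ofFn x))
  exact hget ▸ PR.partDirac_of_partrec' hv
end
end

section
/- The probabilistic function h : ℕ → 𝒫(ℕ) defined by h(x)(y) = 1/2^{y+1} for all x, y ∈ ℕ is probabilistic recursive; indeed h = μ(rand ⊙ Π²₁), where rand : ℕ → 𝒫(ℕ) is given by rand(x)(0) = rand(x)(1) = 1/2. -/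
noncomputable section
open scoped Classical

/-- The probabilistic function rand, with rand(x)(0) = rand(x)(1) = 1/2
and rand(x)(y) = 0 for y > 1. -/
def rand : (Fin 1 → ℕ) → ℕ → ℝ :=
  fun _ y => if y = 0 ∨ y = 1 then (1 : ℝ) / 2 else 0

/-- The projection Π²₁. -/
def proj21 : (Fin 2 → ℕ) → ℕ → ℝ :=
  fun x y => if y = x 0 then (1 : ℝ) else 0

/-!
Composing rand with Π²₁ discards the argument, so every stage of the minimization sees the same
distribution D = rand. Minimizing a constant D gives D(0) · (∑_{m>0} D(m))^y, here (1/2) · (1/2)^y.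
-/

theorem genComp_dirac {n k : ℕ} (f : (Fin n → ℕ) → ℕ → ℝ) (a : Fin n → (Fin k → ℕ) → ℕ) :
    genComp f (fun i x y => if y = a i x then (1 : ℝ) else 0) =
      fun x y => f (fun i => a i x) y := by
  funext x y
  refine (tsum_eq_single (fun i => a i x) fun z hz => ?_).trans (by simp)
  obtain ⟨i, hi⟩ : ∃ i, z i ≠ a i x := by
    by_contra! h
    exact hz (funext h)
  rw [Finset.prod_eq_zero (Finset.mem_univ i) (if_neg hi), mul_zero]

theorem minimize_const {k : ℕ} (D : ℕ → ℝ) :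
    minimize (k := k) (fun _ => D) = fun _ y => D 0 * (∑' m : {m : ℕ // 0 < m}, D m) ^ y := by
  funext x y
  simp only [minimize, Finset.prod_const, Finset.card_range]

theorem rand_eq_coin_comp_zero :
    rand = genComp (fun (x : Fin 1 → ℕ) y => if y = x 0 ∨ y = x 0 + 1 then (1 : ℝ) / 2 else 0)
      (fun (_ : Fin 1) (_ : Fin 1 → ℕ) y => if y = 0 then (1 : ℝ) else 0) := by
  rw [genComp_dirac (a := fun _ _ => 0)]
  rfl

theorem rand_mem_PR : PR rand :=
  rand_eq_coin_comp_zero ▸ PR.comp PR.coin fun _ => PR.zero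

theorem tsum_subtype_pos_rand (x : Fin 1 → ℕ) : ∑' m : {m : ℕ // 0 < m}, rand x m = 1 / 2 := by
  refine (tsum_eq_single ⟨1, one_pos⟩ fun m hm => if_neg ?_).trans (by simp)
  rintro (h | h)
  · exact m.2.ne' h
  · exact hm (Subtype.ext h)

/-- the probabilistic function h(x)(y) = 1/2^(y+1) is probabilistic
recursive; indeed h = μ(rand ⊙ Π²₁). -/
theorem half_pow_mem_PR :
    PR (fun (_ : Fin 1 → ℕ) (y : ℕ) => (1 : ℝ) / 2 ^ (y + 1)) ∧
    minimize (k := 1) (genComp rand (fun _ : Fin 1 => proj21)) =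
      (fun (_ : Fin 1 → ℕ) (y : ℕ) => (1 : ℝ) / 2 ^ (y + 1)) := by
  have hmin : minimize (k := 1) (genComp rand (fun _ : Fin 1 => proj21)) =
      fun _ y => (1 : ℝ) / 2 ^ (y + 1) := by
    have hcomp : genComp rand (fun _ : Fin 1 => proj21) = fun _ => rand fun _ => 0 :=
      genComp_dirac rand fun _ x => x 0
    rw [hcomp, minimize_const, tsum_subtype_pos_rand]
    funext x y
    simp only [rand, true_or, if_true]
    rw [one_div_pow, div_mul_div_comm, one_mul, pow_succ']
  exact ⟨hmin ▸ PR.minim (PR.comp rand_mem_PR fun _ => PR.proj 0), hmin⟩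
end
end
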